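/- arXiv:2502.13516 — 2 statements merged into one kernel-verified Lean document; each statement's English description precedes it below -/
import Mathlib

section
/- Let 𝒯 be a nonempty finite type (the set of trajectories), let T : 𝒯 → ℕ assign each trajectory its length, and for each τ ∈ 𝒯 and t < T τ let p τ t : ℝ → ℝ be the probability of the t-th step of τ as a function of the parameter θ. Fix θ₀ ∈ ℝ and assume each p τ t is differentiable at θ₀ with derivative p' τ t and satisfies p τ t θ₀ > 0. Let r : 𝒯 → ℝ be a fixed (θ-independent) trajectory reward. Then the expected long-term reward J(θ) := ∑_{τ ∈ 𝒯} (∏_{t < T τ} p τ t θ) · r τ is differentiable at θ₀ with derivative J'(θ₀) = ∑_{τ ∈ 𝒯} (∏_{t < T τ} p τ t θ₀) · r τ · ∑_{t < T τ} (p' τ t / p τ t θ₀); i.e., ∇_θ J(θ) = E_{τ ∼ π_θ}[ r(τ) · ∑_t ∇_θ log π_θ(a_{t+1} | s_t) ]. -/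
open Finset in
/-- Lemma (Online Policy Gradient): for a policy over a finite set of trajectories
factorizing as a product of step probabilities, the expected long-term reward
`J(θ) = ∑ τ, π_θ(τ) · r(τ)` has derivative
`∑ τ, π_θ(τ) · r(τ) · ∑ t, (d/dθ) log π_θ(a_{t+1}|s_t)`. -/
theorem online_policy_gradient
    {𝒯 : Type*} [Fintype 𝒯] [Nonempty 𝒯] (T : 𝒯 → ℕ)
    (p : 𝒯 → ℕ → ℝ → ℝ) (θ₀ : ℝ) (p' : 𝒯 → ℕ → ℝ)
    (hdiff : ∀ τ, ∀ t < T τ, HasDerivAt (p τ t) (p' τ t) θ₀)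
    (hpos : ∀ τ, ∀ t < T τ, 0 < p τ t θ₀)
    (r : 𝒯 → ℝ) :
    HasDerivAt (fun θ => ∑ τ, (∏ t ∈ Finset.range (T τ), p τ t θ) * r τ)
      (∑ τ, (∏ t ∈ Finset.range (T τ), p τ t θ₀) * r τ
        * ∑ t ∈ Finset.range (T τ), p' τ t / p τ t θ₀) θ₀ := by
  apply HasDerivAt.fun_sum
  intro τ _
  have hprod : HasDerivAt (fun θ => ∏ t ∈ Finset.range (T τ), p τ t θ)
      (∑ t ∈ Finset.range (T τ), (∏ j ∈ (Finset.range (T τ)).erase t, p τ j θ₀) • p' τ t) θ₀ :=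
    HasDerivAt.fun_finset_prod (fun t ht => hdiff τ t (Finset.mem_range.mp ht))
  have key : (∏ t ∈ Finset.range (T τ), p τ t θ₀) * r τ
        * ∑ t ∈ Finset.range (T τ), p' τ t / p τ t θ₀
      = (∑ t ∈ Finset.range (T τ), (∏ j ∈ (Finset.range (T τ)).erase t, p τ j θ₀) • p' τ t)
        * r τ := by
    rw [mul_right_comm, Finset.mul_sum, Finset.sum_mul, Finset.sum_mul]
    apply Finset.sum_congr rfl
    intro t ht
    have hne : p τ t θ₀ ≠ 0 := (hpos τ t (Finset.mem_range.mp ht)).ne'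
    rw [← Finset.mul_prod_erase _ _ ht, smul_eq_mul]
    field_simp
  rw [key]
  exact hprod.mul_const (r τ)
end

section
/- Let 𝒯 be a nonempty finite type (the set of trajectories), let T : 𝒯 → ℕ assign each trajectory its length, and for each τ ∈ 𝒯 and t < T τ let p τ t : ℝ → ℝ be the θ-parameterized probability of the t-th step of τ under the preference decoding model π^p_θ, and let q τ t > 0 be the corresponding fixed reference probabilities under π^p_ref, with ∑_{τ} ∏_{t < T τ} q τ t = 1. Fix θ₀ ∈ ℝ and assume each p τ t is differentiable at θ₀ with derivative p' τ t and p τ t θ₀ > 0. Define the trajectory reward r(τ) := ∏_{t < T τ} (q τ t / p τ t θ₀) and the offline every-step preference loss L(θ) := − ∑_{τ ∈ 𝒯} (∏_{t < T τ} q τ t) · ∑_{t < T τ} Real.log (p τ t θ). Then L is differentiable at θ₀ and ∑_{τ ∈ 𝒯} (∏_{t < T τ} p τ t θ₀) · r(τ) · ∑_{t < T τ} (p' τ t / p τ t θ₀) = − L'(θ₀); i.e., under the reward r(τ) = ∏_t πref(a_t|s_t)/π^p_θ(a_t|s_t), the online policy-gradient expression E_{τ ∼ π^p_θ}[ r(τ)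 ∑_t ∇_θ log π^p_θ(a_{t+1}|s_t) ] equals −∇_θ 𝓛_every-step. -/
open Finset in
/-- Theorem (Equivalence Between Offline Step DPO and Online Policy Gradient):
with the trajectory reward `r(τ) = ∏ t, q τ t / p τ t θ₀` (the importance ratio
`πref/π^p_θ`), the online policy-gradient expression equals minus the derivative
of the offline every-step preference loss. -/
theorem offline_step_dpo_eq_online_policy_gradient
    {𝒯 : Type*} [Fintype 𝒯] [Nonempty 𝒯] (T : 𝒯 → ℕ)
    (p : 𝒯 → ℕ → ℝ → ℝ) (q : 𝒯 → ℕ → ℝ)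
    (hq : ∀ τ, ∀ t < T τ, 0 < q τ t)
    (hqsum : ∑ τ, ∏ t ∈ Finset.range (T τ), q τ t = 1)
    (θ₀ : ℝ) (p' : 𝒯 → ℕ → ℝ)
    (hdiff : ∀ τ, ∀ t < T τ, HasDerivAt (p τ t) (p' τ t) θ₀)
    (hpos : ∀ τ, ∀ t < T τ, 0 < p τ t θ₀)
    (r : 𝒯 → ℝ)
    (hr : ∀ τ, r τ = ∏ t ∈ Finset.range (T τ), q τ t / p τ t θ₀)
    (L : ℝ → ℝ)
    (hL : ∀ θ, L θ = - ∑ τ, (∏ t ∈ Finset.range (T τ), q τ t)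
        * ∑ t ∈ Finset.range (T τ), Real.log (p τ t θ)) :
    DifferentiableAt ℝ L θ₀ ∧
    ∑ τ, (∏ t ∈ Finset.range (T τ), p τ t θ₀) * r τ
        * ∑ t ∈ Finset.range (T τ), p' τ t / p τ t θ₀
      = - deriv L θ₀ := by
  have hLd : HasDerivAt L
      (- ∑ τ, (∏ t ∈ Finset.range (T τ), q τ t)
        * ∑ t ∈ Finset.range (T τ), p' τ t / p τ t θ₀) θ₀ := by
    have : HasDerivAt (fun θ => ∑ τ, (∏ t ∈ Finset.range (T τ), q τ t)
        * ∑ t ∈ Finset.range (T τ), Real.log (p τ t θ))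
        (∑ τ, (∏ t ∈ Finset.range (T τ), q τ t)
        * ∑ t ∈ Finset.range (T τ), p' τ t / p τ t θ₀) θ₀ := by
      apply HasDerivAt.fun_sum
      intro τ _
      apply HasDerivAt.const_mul
      apply HasDerivAt.fun_sum
      intro t ht
      simp only [Finset.mem_range] at ht
      have := ((hdiff τ t ht).log (hpos τ t ht).ne')
      simpa [div_eq_mul_inv, mul_comm] using this
    have h2 := this.neg
    exact h2.congr_of_eventuallyEq (by filter_upwards with θ using (hL θ))
  refine ⟨hLd.differentiableAt, ?_⟩
  rw [hLd.deriv, neg_neg]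
  apply Finset.sum_congr rfl
  intro τ _
  congr 1
  rw [hr τ, ← Finset.prod_mul_distrib]
  apply Finset.prod_congr rfl
  intro t ht
  simp only [Finset.mem_range] at ht
  rw [mul_comm, div_mul_cancel₀ _ (hpos τ t ht).ne']
end
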